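/- arXiv:1905.03148 — 7 statements merged into one kernel-verified Lean document; each statement's English description precedes it below -/
import Mathlib

section
/- For even k and even m with 0 ≤ m ≤ k/2 - 2, f(k,m) > f(k,m+2); that is, f(k,m) is strictly decreasing in even m on the range 0 ≤ m ≤ k/2. -/
/-- f(k,m) = C(m, m/2) * C(k-m-1, (k-m)/2) -/
def fkm (k m : ℕ) : ℕ := Nat.choose m (m / 2) * Nat.choose (k - m - 1) ((k - m) / 2)

lemma cb_double (n : ℕ) :
    Nat.centralBinom (n + 1) = 2 * Nat.choose (2 * n + 1) (n + 1) := by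
  have h : Nat.choose (2 * n + 1) n = Nat.choose (2 * n + 1) (n + 1) := by
    have := Nat.choose_symm (n := 2 * n + 1) (k := n + 1) (by omega)
    simpa [show 2 * n + 1 - (n + 1) = n by omega] using this
  rw [Nat.centralBinom, show 2 * (n + 1) = (2 * n + 1) + 1 by ring,
    show n + 1 = n + 1 by rfl, Nat.choose_succ_succ, h]
  ring

lemma cb_key {a t : ℕ} (h : a < t) :
    Nat.centralBinom (a + 1) * Nat.centralBinom t <
      Nat.centralBinom a * Nat.centralBinom (t + 1) := by
  have ha := Nat.succ_mul_centralBinom_succ a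
  have ht := Nat.succ_mul_centralBinom_succ t
  apply Nat.lt_of_mul_lt_mul_left (a := (a + 1) * (t + 1))
  have e1 : (a + 1) * (t + 1) * (Nat.centralBinom (a + 1) * Nat.centralBinom t)
      = (t + 1) * (2 * (2 * a + 1)) * (Nat.centralBinom a * Nat.centralBinom t) := by
    rw [show (a + 1) * (t + 1) * (Nat.centralBinom (a + 1) * Nat.centralBinom t)
        = (t + 1) * (((a + 1) * Nat.centralBinom (a + 1)) * Nat.centralBinom t) by ring, ha]
    ring
  have e2 : (a + 1) * (t + 1) * (Nat.centralBinom a * Nat.centralBinom (t + 1))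
      = (a + 1) * (2 * (2 * t + 1)) * (Nat.centralBinom a * Nat.centralBinom t) := by
    rw [show (a + 1) * (t + 1) * (Nat.centralBinom a * Nat.centralBinom (t + 1))
        = (a + 1) * (Nat.centralBinom a * ((t + 1) * Nat.centralBinom (t + 1))) by ring, ht]
    ring
  rw [e1, e2]
  have hpos : 0 < Nat.centralBinom a * Nat.centralBinom t :=
    Nat.mul_pos (Nat.centralBinom_pos a) (Nat.centralBinom_pos t)
  have hlt : (t + 1) * (2 * (2 * a + 1)) < (a + 1) * (2 * (2 * t + 1)) := by nlinarith
  exact Nat.mul_lt_mul_of_lt_of_le hlt (le_refl _) hpos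

theorem stmt1 (k m : ℕ) (hk : Even k) (hkpos : 0 < k) (hm : Even m)
    (hmk : m + 2 ≤ k / 2) : fkm k (m + 2) < fkm k m := by
  obtain ⟨b, rfl⟩ := hk
  obtain ⟨a, rfl⟩ := hm
  obtain ⟨c, rfl⟩ : ∃ c, b = 2 * a + 2 + c := ⟨b - (2 * a + 2), by omega⟩
  set s := a + c with hs
  have h1 : fkm ((2 * a + 2 + c) + (2 * a + 2 + c)) (a + a)
      = Nat.centralBinom a * Nat.choose (2 * (s + 1) + 1) (s + 2) := by
    unfold fkm Nat.centralBinom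
    congr 1 <;> congr 1 <;> omega
  have h2 : fkm ((2 * a + 2 + c) + (2 * a + 2 + c)) (a + a + 2)
      = Nat.centralBinom (a + 1) * Nat.choose (2 * s + 1) (s + 1) := by
    unfold fkm Nat.centralBinom
    congr 1 <;> congr 1 <;> omega
  rw [h1, h2]
  apply Nat.lt_of_mul_lt_mul_left (a := 2)
  have d1 := cb_double s
  have d2 := cb_double (s + 1)
  calc 2 * (Nat.centralBinom (a + 1) * Nat.choose (2 * s + 1) (s + 1))
      = Nat.centralBinom (a + 1) * (2 * Nat.choose (2 * s + 1) (s + 1)) := by ring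
    _ = Nat.centralBinom (a + 1) * Nat.centralBinom (s + 1) := by rw [← d1]
    _ < Nat.centralBinom a * Nat.centralBinom (s + 2) := cb_key (by omega)
    _ = Nat.centralBinom a * (2 * Nat.choose (2 * (s + 1) + 1) (s + 2)) := by
        rw [d2]
    _ = 2 * (Nat.centralBinom a * Nat.choose (2 * (s + 1) + 1) (s + 2)) := by ring
end

section
/- For even k and even m with 2 ≤ m ≤ k, the identity binomial(k,m) * binomial(m, m/2) * binomial(k-m-1, (k-m)/2) = binomial(k-1, k/2 - 1) * binomial(k/2, m/2)^2 holds. -/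
lemma key (B C : ℕ) :
    Nat.choose (2*B+2*C+4) (2*B+2) * (Nat.choose (2*B+2) (B+1) * Nat.choose (2*C+1) (C+1)) =
      Nat.choose (2*B+2*C+3) (B+C+1) * (Nat.choose (B+C+2) (B+1)) ^ 2 := by
  rw [← Nat.cast_inj (R := ℚ)]
  push_cast
  rw [Nat.cast_choose ℚ (by omega : 2*B+2 ≤ 2*B+2*C+4),
      Nat.cast_choose ℚ (by omega : B+1 ≤ 2*B+2),
      Nat.cast_choose ℚ (by omega : C+1 ≤ 2*C+1),
      Nat.cast_choose ℚ (by omega : B+C+1 ≤ 2*B+2*C+3),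
      Nat.cast_choose ℚ (by omega : B+1 ≤ B+C+2),
      show 2*B+2*C+4 - (2*B+2) = 2*C+2 by omega,
      show 2*B+2 - (B+1) = B+1 by omega,
      show 2*C+1 - (C+1) = C by omega,
      show 2*B+2*C+3 - (B+C+1) = B+C+2 by omega,
      show B+C+2 - (B+1) = C+1 by omega]
  have f1 : ((2*B+2*C+4).factorial : ℚ) = (2*B+2*C+4) * (2*B+2*C+3).factorial := by
    rw [show 2*B+2*C+4 = (2*B+2*C+3)+1 from rfl, Nat.factorial_succ]; push_cast; ring
  have f2 : ((2*C+2).factorial : ℚ) = (2*C+2) * (2*C+1).factorial := by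
    rw [show 2*C+2 = (2*C+1)+1 from rfl, Nat.factorial_succ]; push_cast; ring
  have f3 : ((B+C+2).factorial : ℚ) = (B+C+2) * (B+C+1).factorial := by
    rw [show B+C+2 = (B+C+1)+1 from rfl, Nat.factorial_succ]; push_cast; ring
  have f4 : ((C+1).factorial : ℚ) = (C+1) * C.factorial := by
    rw [show C+1 = C+1 from rfl, Nat.factorial_succ]; push_cast; ring
  rw [f1, f2, f3, f4]
  have n1 : ((2*B+2*C+3).factorial : ℚ) ≠ 0 := by positivity
  have n2 : ((2*B+2).factorial : ℚ) ≠ 0 := by positivity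
  have n3 : ((2*C+1).factorial : ℚ) ≠ 0 := by positivity
  have n4 : ((B+1).factorial : ℚ) ≠ 0 := by positivity
  have n5 : ((B+C+1).factorial : ℚ) ≠ 0 := by positivity
  have n6 : (C.factorial : ℚ) ≠ 0 := by positivity
  field_simp
  ring

theorem stmt4 (k m : ℕ) (hk : Even k) (hm : Even m) (hm2 : 2 ≤ m) (hmk : m ≤ k - 2) :
    Nat.choose k m * (Nat.choose m (m / 2) * Nat.choose (k - m - 1) ((k - m) / 2)) =
      Nat.choose (k - 1) (k / 2 - 1) * (Nat.choose (k / 2) (m / 2)) ^ 2 := by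
  obtain ⟨b, hb⟩ := hm
  obtain ⟨a, ha⟩ := hk
  obtain ⟨B, rfl⟩ : ∃ B, b = B + 1 := ⟨b - 1, by omega⟩
  obtain ⟨Cc, rfl⟩ : ∃ Cc, a = B + Cc + 2 := ⟨a - B - 2, by omega⟩
  have h1 : k = 2*B+2*Cc+4 := by omega
  have h2 : m = 2*B+2 := by omega
  subst h1 h2
  have e1 : (2*B+2)/2 = B+1 := by omega
  have e2 : (2*B+2*Cc+4) - (2*B+2) - 1 = 2*Cc+1 := by omega
  have e3 : ((2*B+2*Cc+4) - (2*B+2))/2 = Cc+1 := by omega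
  have e4 : (2*B+2*Cc+4) - 1 = 2*B+2*Cc+3 := by omega
  have e5 : (2*B+2*Cc+4)/2 - 1 = B+Cc+1 := by omega
  have e6 : (2*B+2*Cc+4)/2 = B+Cc+2 := by omega
  rw [e1, e2, e3, e4, e5, e6]
  exact key B Cc
end

section
/- For even n and integers m with 0 ≤ m ≤ n/3, the inequality binomial(n/2, m) / binomial(n+1, 2m+1) ≤ 2 * ((2m+1)/(2(n-m+1)))^{m+1} holds. -/
/-- Cubic Bernoulli inequality. -/
lemma cube_bern (x : ℝ) (hx : 0 ≤ x) :
    ∀ n : ℕ, 1 + (n : ℝ) * x + (n : ℝ) * ((n : ℝ) - 1) / 2 * x ^ 2 +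
      (n : ℝ) * ((n : ℝ) - 1) * ((n : ℝ) - 2) / 6 * x ^ 3 ≤ (1 + x) ^ n := by
  intro n
  induction n with
  | zero => norm_num
  | succ n ih =>
    have h1 : (0:ℝ) ≤ 1 + x := by linarith
    have hn : (0:ℝ) ≤ (n : ℝ) * ((n : ℝ) - 1) * ((n : ℝ) - 2) := by
      rcases n with _ | _ | n
      · norm_num
      · norm_num
      · have h0 : (0:ℝ) ≤ (n:ℝ) := Nat.cast_nonneg n
        push_cast
        nlinarith [mul_nonneg (mul_nonneg (show (0:ℝ) ≤ (n:ℝ)+2 by linarith)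
          (show (0:ℝ) ≤ (n:ℝ)+1 by linarith)) h0]
    have hx4 : (0:ℝ) ≤ x ^ 4 := by positivity
    have key : 1 + ((n:ℝ)+1) * x + ((n:ℝ)+1) * (n:ℝ) / 2 * x ^ 2 +
        ((n:ℝ)+1) * (n:ℝ) * ((n:ℝ) - 1) / 6 * x ^ 3 ≤
        (1 + x) * (1 + (n : ℝ) * x + (n : ℝ) * ((n : ℝ) - 1) / 2 * x ^ 2 +
          (n : ℝ) * ((n : ℝ) - 1) * ((n : ℝ) - 2) / 6 * x ^ 3) := by
      nlinarith [mul_nonneg hn hx4]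
    calc 1 + ((n+1 : ℕ) : ℝ) * x + ((n+1 : ℕ) : ℝ) * (((n+1 : ℕ) : ℝ) - 1) / 2 * x ^ 2 +
          ((n+1 : ℕ) : ℝ) * (((n+1 : ℕ) : ℝ) - 1) * (((n+1 : ℕ) : ℝ) - 2) / 6 * x ^ 3
        = 1 + ((n:ℝ)+1) * x + ((n:ℝ)+1) * (n:ℝ) / 2 * x ^ 2 +
          ((n:ℝ)+1) * (n:ℝ) * ((n:ℝ) - 1) / 6 * x ^ 3 := by push_cast; ring
      _ ≤ (1 + x) * (1 + (n : ℝ) * x + (n : ℝ) * ((n : ℝ) - 1) / 2 * x ^ 2 +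
          (n : ℝ) * ((n : ℝ) - 1) * ((n : ℝ) - 2) / 6 * x ^ 3) := key
      _ ≤ (1 + x) * (1 + x) ^ n := by
          apply mul_le_mul_of_nonneg_left ih h1
      _ = (1 + x) ^ (n + 1) := by ring

lemma lemA (m : ℕ) : (8:ℝ)/3 ≤ ((2*(m:ℝ)+3)/(2*(m:ℝ)+1))^(m+1) := by
  have hb : (0:ℝ) < 2*(m:ℝ)+1 := by positivity
  have hx : (0:ℝ) ≤ 2/(2*(m:ℝ)+1) := by positivity
  have h := cube_bern (2/(2*(m:ℝ)+1)) hx (m+1)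
  have hbase : (1 + 2/(2*(m:ℝ)+1)) = (2*(m:ℝ)+3)/(2*(m:ℝ)+1) := by
    field_simp
    ring
  rw [hbase] at h
  refine le_trans ?_ h
  rw [← sub_nonneg]
  have h2 : 1 + ((m+1 : ℕ) : ℝ) * (2/(2*(m:ℝ)+1)) +
      ((m+1 : ℕ) : ℝ) * (((m+1 : ℕ) : ℝ) - 1) / 2 * (2/(2*(m:ℝ)+1)) ^ 2 +
      ((m+1 : ℕ) : ℝ) * (((m+1 : ℕ) : ℝ) - 1) * (((m+1 : ℕ) : ℝ) - 2) / 6 *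
        (2/(2*(m:ℝ)+1)) ^ 3 - 8/3
      = (6*(m:ℝ)^2 + 2*(m:ℝ) + 1) / (3*(2*(m:ℝ)+1)^3) := by
    push_cast
    field_simp
    ring
  rw [h2]
  positivity

/-- The key step inequality. -/
lemma key_step (m k : ℕ) (h : 3*m+3 ≤ 2*k) :
    2 * ((2*(m:ℝ)+1)/(2*(2*(k:ℝ)-(m:ℝ)+1)))^(m+1) * ((2*(m:ℝ)+3)/(2*(k:ℝ)-2*(m:ℝ)-1)) ≤
      2 * ((2*(m:ℝ)+3)/(2*(2*(k:ℝ)-(m:ℝ))))^(m+2) := by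
  have hc : 3*(m:ℝ)+3 ≤ 2*(k:ℝ) := by exact_mod_cast h
  have hm0 : (0:ℝ) ≤ (m:ℝ) := Nat.cast_nonneg m
  have p1 : (0:ℝ) < 2*(m:ℝ)+1 := by linarith
  have p2 : (0:ℝ) < 2*(m:ℝ)+3 := by linarith
  have p3 : (0:ℝ) < 2*(k:ℝ)-(m:ℝ) := by linarith
  have p4 : (0:ℝ) < 2*(k:ℝ)-(m:ℝ)+1 := by linarith
  have p5 : (0:ℝ) < 2*(k:ℝ)-2*(m:ℝ)-1 := by linarith
  set A : ℝ := (2*(m:ℝ)+3)/(2*(m:ℝ)+1) with hA_def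
  set B : ℝ := (2*(k:ℝ)-(m:ℝ)+1)/(2*(k:ℝ)-(m:ℝ)) with hB_def
  set L1 : ℝ := (2*(m:ℝ)+1)/(2*(2*(k:ℝ)-(m:ℝ)+1)) with hL1_def
  set L2 : ℝ := (2*(m:ℝ)+3)/(2*(2*(k:ℝ)-(m:ℝ))) with hL2_def
  have hApos : 0 < A := by positivity
  have hBpos : 0 < B := by positivity
  have hL1pos : 0 < L1 := by positivity
  have hL2pos : 0 < L2 := by positivity
  have hA : (8:ℝ)/3 ≤ A^(m+1) := lemA m
  have hB : 1 + ((m:ℝ)+1) * (1/(2*(k:ℝ)-(m:ℝ))) ≤ B^(m+1) := by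
    have hx0 : (0:ℝ) ≤ 1/(2*(k:ℝ)-(m:ℝ)) := by positivity
    have hx : (-2:ℝ) ≤ 1/(2*(k:ℝ)-(m:ℝ)) := by linarith
    have h1 := one_add_mul_le_pow hx (m+1)
    have hbase : (1 + 1/(2*(k:ℝ)-(m:ℝ))) = B := by
      rw [hB_def]; field_simp
    rw [hbase] at h1
    calc 1 + ((m:ℝ)+1) * (1/(2*(k:ℝ)-(m:ℝ)))
        = 1 + ((m+1 : ℕ):ℝ) * (1/(2*(k:ℝ)-(m:ℝ))) := by push_cast; ring
      _ ≤ B^(m+1) := h1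
  have hQ : 2*(2*(k:ℝ)-(m:ℝ))/(2*(k:ℝ)-2*(m:ℝ)-1) ≤ A^(m+1) * B^(m+1) := by
    have step1 : (8:ℝ)/3 * (1 + ((m:ℝ)+1) * (1/(2*(k:ℝ)-(m:ℝ)))) ≤ A^(m+1) * B^(m+1) := by
      apply mul_le_mul hA hB (by positivity) (by positivity)
    refine le_trans ?_ step1
    rw [div_le_iff₀ p5]
    have hexp : (8:ℝ)/3 * (1 + ((m:ℝ)+1) * (1/(2*(k:ℝ)-(m:ℝ)))) =
        8 * (2*(k:ℝ)-(m:ℝ)+(m:ℝ)+1) / (3 * (2*(k:ℝ)-(m:ℝ))) := by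
      field_simp
      ring
    rw [hexp, div_mul_eq_mul_div, le_div_iff₀ (by positivity)]
    nlinarith [sq_nonneg ((m:ℝ)+1)]
  have hL2eq : L2 = L1 * A * B := by
    rw [hL1_def, hA_def, hB_def, hL2_def]
    field_simp
  have hpow : L2^(m+2) = L1^(m+1) * (A^(m+1) * B^(m+1)) * L2 := by
    rw [pow_succ, hL2eq, mul_pow, mul_pow, ← hL2eq]; ring
  rw [hpow]
  have hfinal : (2*(m:ℝ)+3)/(2*(k:ℝ)-2*(m:ℝ)-1) ≤ (A^(m+1) * B^(m+1)) * L2 := by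
    have h5 := mul_le_mul_of_nonneg_right hQ (le_of_lt hL2pos)
    refine le_trans (le_of_eq ?_) h5
    rw [hL2_def]
    field_simp
  calc 2 * L1^(m+1) * ((2*(m:ℝ)+3)/(2*(k:ℝ)-2*(m:ℝ)-1))
      ≤ 2 * L1^(m+1) * ((A^(m+1) * B^(m+1)) * L2) := by
        apply mul_le_mul_of_nonneg_left hfinal (by positivity)
    _ = 2 * (L1^(m+1) * (A^(m+1) * B^(m+1)) * L2) := by ring

/-- Main auxiliary lemma in terms of k = n/2. -/
lemma aux_ineq (k : ℕ) (hk : 0 < k) : ∀ m : ℕ, 3*m ≤ 2*k →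
    (Nat.choose k m : ℝ) / (Nat.choose (2*k+1) (2*m+1) : ℝ) ≤
      2 * ((2*(m:ℝ)+1)/(2*(2*(k:ℝ)-(m:ℝ)+1)))^(m+1) := by
  intro m
  induction m with
  | zero =>
    intro _
    have hkpos : (0:ℝ) < 2*(k:ℝ)+1 := by positivity
    rw [show 2*0+1 = 1 from rfl, Nat.choose_zero_right, Nat.choose_one_right]
    push_cast
    rw [pow_one]
    apply le_of_eq
    field_simp
    simp only [Nat.cast_zero, mul_zero, zero_add, sub_zero, mul_one]
    rw [div_self hkpos.ne']
  | succ m ih =>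
    intro hm3
    have hm3' : 3*m ≤ 2*k := by omega
    have hmk : m + 1 ≤ k := by omega
    have ihm := ih hm3'
    have hc0 : 0 < Nat.choose k m := Nat.choose_pos (by omega)
    have hc1 : 0 < Nat.choose k (m+1) := Nat.choose_pos hmk
    have hd1 : 0 < Nat.choose (2*k+1) (2*m+1) := Nat.choose_pos (by omega)
    have hd2 : 0 < Nat.choose (2*k+1) (2*m+2) := Nat.choose_pos (by omega)
    have hd3 : 0 < Nat.choose (2*k+1) (2*m+3) := Nat.choose_pos (by omega)
    have c1 := Nat.choose_succ_right_eq k m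
    have c2 := Nat.choose_succ_right_eq (2*k+1) (2*m+1)
    have c3 := Nat.choose_succ_right_eq (2*k+1) (2*m+2)
    have r1 : (Nat.choose k (m+1) : ℝ) * ((m:ℝ)+1) = (Nat.choose k m : ℝ) * ((k:ℝ)-(m:ℝ)) := by
      have := congrArg (Nat.cast : ℕ → ℝ) c1
      rw [Nat.cast_mul, Nat.cast_mul, Nat.cast_sub (by omega)] at this
      push_cast at this
      linarith [this]
    have r2 : (Nat.choose (2*k+1) (2*m+2) : ℝ) * (2*(m:ℝ)+2) =
        (Nat.choose (2*k+1) (2*m+1) : ℝ) * (2*(k:ℝ)-2*(m:ℝ)) := by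
      have := congrArg (Nat.cast : ℕ → ℝ) c2
      rw [Nat.cast_mul, Nat.cast_mul, Nat.cast_sub (by omega)] at this
      push_cast at this
      linarith [this]
    have r3 : (Nat.choose (2*k+1) (2*m+3) : ℝ) * (2*(m:ℝ)+3) =
        (Nat.choose (2*k+1) (2*m+2) : ℝ) * (2*(k:ℝ)-2*(m:ℝ)-1) := by
      have := congrArg (Nat.cast : ℕ → ℝ) c3
      rw [Nat.cast_mul, Nat.cast_mul, Nat.cast_sub (by omega)] at this
      push_cast at this
      linarith [this]
    have hm0 : (0:ℝ) ≤ (m:ℝ) := Nat.cast_nonneg m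
    have hkR : 3*(m:ℝ)+3 ≤ 2*(k:ℝ) := by exact_mod_cast hm3
    have p5 : (0:ℝ) < 2*(k:ℝ)-2*(m:ℝ)-1 := by linarith
    have hd1R : (0:ℝ) < (Nat.choose (2*k+1) (2*m+1) : ℝ) := by exact_mod_cast hd1
    have hd2R : (0:ℝ) < (Nat.choose (2*k+1) (2*m+2) : ℝ) := by exact_mod_cast hd2
    have hd3R : (0:ℝ) < (Nat.choose (2*k+1) (2*m+3) : ℝ) := by exact_mod_cast hd3
    have E : (Nat.choose k (m+1) : ℝ) / (Nat.choose (2*k+1) (2*(m+1)+1) : ℝ) =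
        ((Nat.choose k m : ℝ) / (Nat.choose (2*k+1) (2*m+1) : ℝ)) *
          ((2*(m:ℝ)+3)/(2*(k:ℝ)-2*(m:ℝ)-1)) := by
      have h23 : 2*(m+1)+1 = 2*m+3 := by ring
      rw [h23]
      rw [div_mul_div_comm, div_eq_div_iff (by positivity) (by positivity)]
      have r2' : (Nat.choose (2*k+1) (2*m+2) : ℝ) * ((m:ℝ)+1) =
          (Nat.choose (2*k+1) (2*m+1) : ℝ) * ((k:ℝ)-(m:ℝ)) := by linarith [r2]
      have hM1 : ((m:ℝ)+1) ≠ 0 := by positivity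
      apply mul_right_cancel₀ hM1
      linear_combination ((Nat.choose (2*k+1) (2*m+1) : ℝ)*(2*(k:ℝ)-2*(m:ℝ)-1)) * r1
        - ((Nat.choose k m : ℝ)*(2*(k:ℝ)-2*(m:ℝ)-1)) * r2'
        - ((Nat.choose k m : ℝ)*((m:ℝ)+1)) * r3
    rw [E]
    have step1 : ((Nat.choose k m : ℝ) / (Nat.choose (2*k+1) (2*m+1) : ℝ)) *
          ((2*(m:ℝ)+3)/(2*(k:ℝ)-2*(m:ℝ)-1)) ≤
        2 * ((2*(m:ℝ)+1)/(2*(2*(k:ℝ)-(m:ℝ)+1)))^(m+1) *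
          ((2*(m:ℝ)+3)/(2*(k:ℝ)-2*(m:ℝ)-1)) := by
      apply mul_le_mul_of_nonneg_right ihm (by positivity)
    refine le_trans step1 (le_trans (key_step m k (by omega)) (le_of_eq ?_))
    push_cast
    ring

theorem stmt8 (n m : ℕ) (hn : Even n) (hnpos : 0 < n) (hm : m ≤ n / 3) :
    (Nat.choose (n / 2) m : ℝ) / (Nat.choose (n + 1) (2 * m + 1) : ℝ) ≤
      2 * ((2 * (m : ℝ) + 1) / (2 * ((n : ℝ) - m + 1))) ^ (m + 1) := by
  obtain ⟨k, hk⟩ := hn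
  have hn2 : n = 2*k := by omega
  have hk0 : 0 < k := by omega
  have hm3 : 3*m ≤ 2*k := by omega
  have h1 : n / 2 = k := by omega
  have h2 : n + 1 = 2*k + 1 := by omega
  rw [h1, h2]
  have h3 := aux_ineq k hk0 m hm3
  have hnR : (n:ℝ) = 2*(k:ℝ) := by exact_mod_cast hn2
  rw [hnR]
  exact h3
end

section
/- For even n and integers m with 1 ≤ m ≤ (n+1)/3, the inequality binomial(n/2, m) / binomial(n+1, 2m) ≤ (m/(n-m+1))^m holds. -/
open Finset

private lemma key_identity (k m : ℕ) (hm : m ≤ k) :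
    ((2*k+1).choose (2*m) : ℝ) * ∏ j ∈ range m, (2*(j:ℝ)+1) =
    (k.choose m : ℝ) * ∏ j ∈ range m, ((2*(k:ℝ)+1) - 2*j) := by
  induction m with
  | zero => simp
  | succ m ih =>
    have hm' : m ≤ k := Nat.le_of_succ_le hm
    have ih' := ih hm'
    have h1 := Nat.choose_succ_right_eq (2*k+1) (2*m)
    have h2 := Nat.choose_succ_right_eq (2*k+1) (2*m+1)
    have h3 := Nat.choose_succ_right_eq k m
    rw [show 2*m+1+1 = 2*m+2 from by ring] at h2
    have e1 : ((2*k+1).choose (2*m+1) : ℝ) * (2*(m:ℝ)+1) =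
        ((2*k+1).choose (2*m) : ℝ) * ((2*(k:ℝ)+1) - 2*m) := by
      have hle : 2*m ≤ 2*k+1 := by omega
      have := congrArg (Nat.cast (R := ℝ)) h1
      push_cast [Nat.cast_sub hle] at this
      linarith
    have e2 : ((2*k+1).choose (2*m+2) : ℝ) * (2*(m:ℝ)+2) =
        ((2*k+1).choose (2*m+1) : ℝ) * (2*(k:ℝ) - 2*m) := by
      have hle : 2*m+1 ≤ 2*k+1 := by omega
      have hle2 : 2*m ≤ 2*k := by omega
      have := congrArg (Nat.cast (R := ℝ)) h2
      push_cast [Nat.cast_sub hle, Nat.cast_sub hle2] at this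
      linarith
    have e3 : (k.choose (m+1) : ℝ) * ((m:ℝ)+1) =
        (k.choose m : ℝ) * ((k:ℝ) - m) := by
      have hle : m ≤ k := hm'
      have := congrArg (Nat.cast (R := ℝ)) h3
      push_cast [Nat.cast_sub hle] at this
      linarith
    rw [show 2*(m+1) = 2*m+2 from by ring]
    rw [prod_range_succ, prod_range_succ]
    set P1 := ∏ j ∈ range m, (2*(j:ℝ)+1) with hP
    set Q1 := ∏ j ∈ range m, ((2*(k:ℝ)+1) - 2*j) with hQ
    apply mul_right_cancel₀ (show ((2*(m:ℝ)+2) * ((m:ℝ)+1)) ≠ 0 by positivity)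
    linear_combination ((2*(m:ℝ)+1)*P1*((m:ℝ)+1)) * e2
      + ((2*(k:ℝ)-2*(m:ℝ))*P1*((m:ℝ)+1)) * e1
      + (((2*(k:ℝ)+1)-2*(m:ℝ))*(2*(k:ℝ)-2*(m:ℝ))*((m:ℝ)+1)) * ih'
      - (Q1*((2*(k:ℝ)+1)-2*(m:ℝ))*(2*(m:ℝ)+2)) * e3

private lemma prod_bound (k m : ℕ) (hm1 : 1 ≤ m) (h3 : 3*m ≤ 2*k+1) :
    ∏ j ∈ range m, ((2*(j:ℝ)+1) / ((2*(k:ℝ)+1) - 2*j)) ≤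
      ((m:ℝ)/(2*(k:ℝ) - m + 1))^m := by
  set B : ℝ := 2*(k:ℝ) - m + 1 with hB
  have hmk : 2*m ≤ 2*k := by omega
  have hBm : (m:ℝ) + 1 ≤ B := by
    have h2 : (2:ℝ)*m ≤ 2*k := by exact_mod_cast hmk
    rw [hB]; linarith
  have hBpos : (0:ℝ) < B := by
    have h1 : (1:ℝ) ≤ m := by exact_mod_cast hm1
    linarith
  set f : ℕ → ℝ := fun j => (2*(j:ℝ)+1) / ((2*(k:ℝ)+1) - 2*j) with hf
  have hden : ∀ j < m, (0:ℝ) < (2*(k:ℝ)+1) - 2*j := by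
    intro j hj
    have : (j:ℝ) ≤ (m:ℝ) - 1 := by
      have : j + 1 ≤ m := hj
      have := (Nat.cast_le (α := ℝ)).2 this
      push_cast at this; linarith
    have h3' : (3:ℝ)*m ≤ 2*k+1 := by exact_mod_cast h3
    have h1 : (1:ℝ) ≤ m := by exact_mod_cast hm1
    nlinarith
  have hfnn : ∀ j ∈ range m, (0:ℝ) ≤ f j := by
    intro j hj
    rw [mem_range] at hj
    exact div_nonneg (by positivity) (le_of_lt (hden j hj))
  have hQnn : (0:ℝ) ≤ ∏ j ∈ range m, f j := prod_nonneg hfnn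
  have hpair : ∀ j ∈ range m, f j * f (m - 1 - j) ≤ ((m:ℝ)/B)^2 := by
    intro j hj
    rw [mem_range] at hj
    have hjm : (↑(m - 1 - j) : ℝ) = (m:ℝ) - 1 - j := by
      have : m - 1 - j + (1 + j) = m := by omega
      have := congrArg (Nat.cast (R := ℝ)) this
      push_cast at this; linarith
    have hd1 : (0:ℝ) < (2*(k:ℝ)+1) - 2*j := hden j hj
    have hd2 : (0:ℝ) < (2*(k:ℝ)+1) - 2*(↑(m-1-j):ℝ) := hden _ (by omega)
    simp only [hf]
    rw [div_mul_div_comm, div_pow, div_le_div_iff₀ (by positivity) (by positivity)]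
    rw [hjm] at hd2 ⊢
    have h1 : (1:ℝ) ≤ m := by exact_mod_cast hm1
    have hu : (0:ℝ) ≤ ((m:ℝ) - 1 - 2*j)^2 := sq_nonneg _
    have hBm2 : (m:ℝ)^2 ≤ B^2 := by nlinarith
    have hD1 : (2*(k:ℝ)+1) - 2*j = (B+1) + ((m:ℝ) - 1 - 2*j) := by rw [hB]; ring
    have hD2 : (2*(k:ℝ)+1) - 2*((m:ℝ)-1-j) = (B+1) - ((m:ℝ) - 1 - 2*j) := by
      rw [hB]; ring
    rw [hD1, hD2]
    have key : (m:ℝ)^2 * (((B+1) + ((m:ℝ) - 1 - 2*j)) * ((B+1) - ((m:ℝ) - 1 - 2*j)))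
        - (2*(j:ℝ)+1) * (2*((m:ℝ)-1-j)+1) * B^2
        = (m:ℝ)^2 * (2*B+1) + ((m:ℝ) - 1 - 2*j)^2 * (B^2 - (m:ℝ)^2) := by ring
    have hpos1 : (0:ℝ) ≤ (m:ℝ)^2 * (2*B+1) :=
      mul_nonneg (sq_nonneg _) (by linarith)
    have hpos2 : (0:ℝ) ≤ ((m:ℝ) - 1 - 2*j)^2 * (B^2 - (m:ℝ)^2) :=
      mul_nonneg hu (by linarith)
    linarith
  have hsq : (∏ j ∈ range m, f j) * (∏ j ∈ range m, f j) ≤ (((m:ℝ)/B)^m)^2 := by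
    have hrefl : ∏ j ∈ range m, f (m - 1 - j) = ∏ j ∈ range m, f j :=
      prod_range_reflect f m
    calc (∏ j ∈ range m, f j) * (∏ j ∈ range m, f j)
        = ∏ j ∈ range m, (f j * f (m - 1 - j)) := by
          rw [prod_mul_distrib, hrefl]
      _ ≤ ∏ j ∈ range m, ((m:ℝ)/B)^2 := by
          apply prod_le_prod
          · intro j hj
            rw [mem_range] at hj
            exact mul_nonneg (hfnn j (mem_range.2 hj)) (hfnn _ (mem_range.2 (by omega)))
          · exact hpair
      _ = (((m:ℝ)/B)^m)^2 := by rw [prod_const, card_range]; ring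
  have hRnn : (0:ℝ) ≤ ((m:ℝ)/B)^m := by positivity
  nlinarith [hQnn, hRnn, hsq]

theorem stmt9 (n m : ℕ) (hn : Even n) (hnpos : 0 < n) (hm1 : 1 ≤ m)
    (hm : m ≤ (n + 1) / 3) :
    (Nat.choose (n / 2) m : ℝ) / (Nat.choose (n + 1) (2 * m) : ℝ) ≤
      ((m : ℝ) / ((n : ℝ) - m + 1)) ^ m := by
  obtain ⟨k, hk⟩ := hn
  have hn2 : n = 2 * k := by omega
  subst hn2
  have h3 : 3 * m ≤ 2 * k + 1 := by omega
  have hmk : m ≤ k := by omega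
  have hd2 : 2 * k / 2 = k := by omega
  rw [hd2]
  have hkey := key_identity k m hmk
  have hApos : (0:ℝ) < ((2*k+1).choose (2*m) : ℝ) := by
    exact_mod_cast Nat.choose_pos (by omega)
  have hQpos : (0:ℝ) < ∏ j ∈ range m, ((2*(k:ℝ)+1) - 2*j) := by
    apply prod_pos
    intro j hj
    rw [mem_range] at hj
    have : (j:ℝ) + 1 ≤ m := by exact_mod_cast hj
    have : (3:ℝ)*m ≤ 2*k+1 := by exact_mod_cast h3
    have h1 : (1:ℝ) ≤ m := by exact_mod_cast hm1
    nlinarith [show (j:ℝ) + 1 ≤ m from by exact_mod_cast hj]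
  have heq : (Nat.choose k m : ℝ) / (Nat.choose (2*k + 1) (2 * m) : ℝ) =
      ∏ j ∈ range m, ((2*(j:ℝ)+1) / ((2*(k:ℝ)+1) - 2*j)) := by
    rw [prod_div_distrib]
    rw [div_eq_div_iff hApos.ne' hQpos.ne'] at *
    · linarith [hkey]
  rw [heq]
  have := prod_bound k m hm1 h3
  convert this using 2
  push_cast
  ring
end

section
/- For odd n and 0 ≤ t ≤ n, the middle Krawchouk polynomial satisfies K^n_{(n-1)/2}(t) = (-1)^{⌊t/2⌋} * binomial(n, (n-1)/2) * binomial((n-1)/2, ⌊t/2⌋) / binomial(n, t). -/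
open Finset

/-- The k-th Krawchouk polynomial K^n_k evaluated at t, as a real number. -/
def kraw (n k t : ℕ) : ℝ :=
  ∑ j ∈ Finset.range (k + 1),
    (-1 : ℝ) ^ j * (Nat.choose t j : ℝ) * (Nat.choose (n - t) (k - j) : ℝ)

open Polynomial in
lemma krawAux_coeff_one_sub_X_pow (m j : ℕ) :
    (((1 : ℝ[X]) - X) ^ m).coeff j = (-1) ^ j * (m.choose j : ℝ) := by
  have h : ((1 : ℝ[X]) - X) ^ m = C ((-1 : ℝ) ^ m) * (X + C (-1)) ^ m := by
    rw [C_pow, ← mul_pow]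
    congr 1
    simp [mul_add]
    ring
  rw [h, coeff_C_mul, coeff_X_add_C_pow]
  by_cases hj : j ≤ m
  · have : (-1 : ℝ) ^ m = (-1) ^ (m - j) * (-1) ^ j := by
      rw [← pow_add]; congr 1; omega
    rw [this]
    ring_nf
    rw [show (m-j)*2 = 2*(m-j) by ring, pow_mul]
    norm_num
  · simp [Nat.choose_eq_zero_of_lt (by omega : m < j)]

open Polynomial in
lemma krawAux_coeff_one_sub_X_sq_pow (m r : ℕ) :
    (((1 : ℝ[X]) - X ^ 2) ^ m).coeff r =
      if r % 2 = 0 then (-1) ^ (r / 2) * (m.choose (r / 2) : ℝ) else 0 := by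
  have h : ((1 : ℝ[X]) - X ^ 2) ^ m
      = ∑ i ∈ range (m + 1), C ((-1 : ℝ) ^ i * m.choose i) * X ^ (2 * i) := by
    rw [sub_eq_add_neg, add_comm, add_pow]
    apply Finset.sum_congr rfl
    intro i hi
    rw [neg_pow, ← pow_mul, one_pow]
    simp [C_mul, mul_comm, mul_assoc, mul_left_comm]
  rw [h, finset_sum_coeff]
  simp only [coeff_C_mul, coeff_X_pow]
  by_cases hr : r % 2 = 0
  · rw [if_pos hr]
    by_cases hrm : r / 2 ≤ m
    · rw [Finset.sum_eq_single (r / 2)]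
      · rw [if_pos (by omega)]; simp
      · intro b _ hb
        rw [if_neg (by omega)]; simp
      · intro hmem
        exact absurd (Finset.mem_range.2 (by omega)) hmem
    · rw [Nat.choose_eq_zero_of_lt (by omega), Finset.sum_eq_zero]
      · simp
      · intro b hb
        rw [if_neg (by simp at hb; omega)]; simp
  · rw [if_neg hr, Finset.sum_eq_zero]
    intro b hb
    rw [if_neg (by omega)]; simp

open Polynomial in
lemma krawAux_keysum (m t : ℕ) :
    ∑ j ∈ range (t + 1), (-1 : ℝ) ^ j * (m.choose j : ℝ) * ((m + 1).choose (t - j) : ℝ)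
      = (-1) ^ (t / 2) * (m.choose (t / 2) : ℝ) := by
  have hpoly : ((1 : ℝ[X]) - X) ^ m * (1 + X) ^ (m + 1)
      = ((1 : ℝ[X]) - X ^ 2) ^ m * (1 + X) := by
    rw [pow_succ, ← mul_assoc, ← mul_pow,
      show ((1 : ℝ[X]) - X) * (1 + X) = 1 - X ^ 2 by ring]
  have hL : (((1 : ℝ[X]) - X) ^ m * (1 + X) ^ (m + 1)).coeff t
      = ∑ j ∈ range (t + 1), (-1 : ℝ) ^ j * (m.choose j : ℝ) * ((m + 1).choose (t - j) : ℝ) := by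
    rw [coeff_mul, Finset.Nat.sum_antidiagonal_eq_sum_range_succ_mk]
    apply Finset.sum_congr rfl
    intro j _
    rw [krawAux_coeff_one_sub_X_pow, coeff_one_add_X_pow]
  have hR : (((1 : ℝ[X]) - X ^ 2) ^ m * (1 + X)).coeff t
      = (-1 : ℝ) ^ (t / 2) * (m.choose (t / 2) : ℝ) := by
    rw [mul_add, mul_one, coeff_add]
    rcases Nat.even_or_odd t with he | ho
    · have ht2 : t % 2 = 0 := Nat.even_iff.1 he
      rcases Nat.eq_zero_or_pos t with h0 | hpos
      · subst h0
        simp [krawAux_coeff_one_sub_X_sq_pow]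
      · obtain ⟨s, rfl⟩ : ∃ s, t = s + 1 := ⟨t - 1, by omega⟩
        rw [coeff_mul_X, krawAux_coeff_one_sub_X_sq_pow, krawAux_coeff_one_sub_X_sq_pow,
          if_pos ht2, if_neg (by omega)]
        ring
    · have ht2 : t % 2 = 1 := Nat.odd_iff.1 ho
      obtain ⟨s, rfl⟩ : ∃ s, t = s + 1 := ⟨t - 1, by omega⟩
      rw [coeff_mul_X, krawAux_coeff_one_sub_X_sq_pow, krawAux_coeff_one_sub_X_sq_pow,
        if_neg (by omega), if_pos (by omega)]
      have : s / 2 = (s + 1) / 2 := by omega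
      rw [this]
      ring
  rw [← hL, hpoly, hR]

lemma krawAux_chooseswap {N a b : ℕ} :
    N.choose a * (N - a).choose b = N.choose b * (N - b).choose a := by
  by_cases h : a + b ≤ N
  · have h1 := Nat.choose_mul (n := N) (k := a + b) (s := a) (Nat.le_add_right a b)
    have h2 := Nat.choose_mul (n := N) (k := a + b) (s := b) (Nat.le_add_left b a)
    rw [Nat.add_sub_cancel_left] at h1
    rw [Nat.add_sub_cancel] at h2
    rw [Nat.choose_symm_add] at h1
    rw [← h1, ← h2]
  · by_cases haN : a ≤ N
    · by_cases hbN : b ≤ N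
      · have hb : (N - a).choose b = 0 := Nat.choose_eq_zero_of_lt (by omega)
        have ha : (N - b).choose a = 0 := Nat.choose_eq_zero_of_lt (by omega)
        rw [ha, hb, Nat.mul_zero, Nat.mul_zero]
      · have h1 : N.choose b = 0 := Nat.choose_eq_zero_of_lt (by omega)
        have h2 : (N - a).choose b = 0 := Nat.choose_eq_zero_of_lt (by omega)
        rw [h1, h2, Nat.mul_zero, Nat.zero_mul]
    · have h1 : N.choose a = 0 := Nat.choose_eq_zero_of_lt (by omega)
      have h2 : (N - b).choose a = 0 := Nat.choose_eq_zero_of_lt (by omega)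
      rw [h1, h2, Nat.mul_zero, Nat.zero_mul]

lemma krawAux_termwise {n t k j : ℕ} (hjt : j ≤ t) (htn : t ≤ n) (hjk : j ≤ k) (hkn : k ≤ n) :
    n.choose t * (t.choose j * (n - t).choose (k - j)) =
    n.choose k * (k.choose j * (n - k).choose (t - j)) := by
  rw [← Nat.mul_assoc, Nat.choose_mul (n := n) hjt, ← Nat.mul_assoc, Nat.choose_mul (n := n) hjk,
    Nat.mul_assoc, Nat.mul_assoc]
  congr 1
  have h1 : n - t = (n - j) - (t - j) := by omega
  have h2 : n - k = (n - j) - (k - j) := by omega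
  rw [h1, h2, krawAux_chooseswap]

theorem stmt14 (n t : ℕ) (hn : Odd n) (ht : t ≤ n) :
    kraw n ((n - 1) / 2) t =
      (-1 : ℝ) ^ (t / 2) * (Nat.choose n ((n - 1) / 2) : ℝ) *
        (Nat.choose ((n - 1) / 2) (t / 2) : ℝ) / (Nat.choose n t : ℝ) := by
  obtain ⟨m, hm⟩ := hn
  have hm' : (n - 1) / 2 = m := by omega
  have hmn : m ≤ n := by omega
  have hnm : n - m = m + 1 := by omega
  rw [hm']
  set M := min m t with hM
  have key : (n.choose t : ℝ) * kraw n m t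
      = (n.choose m : ℝ) * ((-1) ^ (t / 2) * (m.choose (t / 2) : ℝ)) := by
    rw [← krawAux_keysum m t]
    unfold kraw
    rw [Finset.mul_sum, Finset.mul_sum]
    have e1 : ∑ j ∈ range (m + 1),
          (n.choose t : ℝ) * ((-1 : ℝ) ^ j * (t.choose j : ℝ) * ((n - t).choose (m - j) : ℝ))
        = ∑ j ∈ range (M + 1),
          (n.choose t : ℝ) * ((-1 : ℝ) ^ j * (t.choose j : ℝ) * ((n - t).choose (m - j) : ℝ)) := by
      refine (Finset.sum_subset (Finset.range_subset_range.2 (by omega)) ?_).symm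
      intro j hj hnj
      simp only [Finset.mem_range] at hj hnj
      rw [Nat.choose_eq_zero_of_lt (show t < j by omega)]
      simp
    have e2 : ∑ j ∈ range (t + 1),
          (n.choose m : ℝ) * ((-1 : ℝ) ^ j * (m.choose j : ℝ) * ((m + 1).choose (t - j) : ℝ))
        = ∑ j ∈ range (M + 1),
          (n.choose m : ℝ) * ((-1 : ℝ) ^ j * (m.choose j : ℝ) * ((m + 1).choose (t - j) : ℝ)) := by
      refine (Finset.sum_subset (Finset.range_subset_range.2 (by omega)) ?_).symm
      intro j hj hnj
      simp only [Finset.mem_range] at hj hnj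
      rw [Nat.choose_eq_zero_of_lt (show m < j by omega)]
      simp
    rw [e1, e2]
    apply Finset.sum_congr rfl
    intro j hj
    simp only [Finset.mem_range] at hj
    have hjt : j ≤ t := by omega
    have hjm : j ≤ m := by omega
    have hc := krawAux_termwise hjt ht hjm hmn
    rw [hnm] at hc
    have hc' : (n.choose t : ℝ) * ((t.choose j : ℝ) * ((n - t).choose (m - j) : ℝ))
        = (n.choose m : ℝ) * ((m.choose j : ℝ) * ((m + 1).choose (t - j) : ℝ)) := by
      exact_mod_cast congrArg (Nat.cast : ℕ → ℝ) hc
    linear_combination ((-1 : ℝ) ^ j) * hc'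
  have hne : (n.choose t : ℝ) ≠ 0 := by
    exact_mod_cast (Nat.choose_pos ht).ne'
  rw [eq_div_iff hne]
  linear_combination key
end

section
/- For odd n and any 0 ≤ t ≤ n, the square of the middle Krawchouk value satisfies K^n_{(n-1)/2}(t)^2 * binomial(n,t)^2 = binomial(n, (n-1)/2)^2 * binomial((n-1)/2, ⌊t/2⌋)^2. -/
open Finset

open Polynomial in
/-- Coefficients of `(1 - X^d)^t`. -/
lemma coeff_osxp (d t m : ℕ) (hd : 0 < d) :
    ((1 - X ^ d : ℝ[X]) ^ t).coeff m =
      if d ∣ m then (-1 : ℝ) ^ (m / d) * (t.choose (m / d) : ℝ) else 0 := by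
  have h : (1 - X ^ d : ℝ[X]) = (-X ^ d) + 1 := by ring
  rw [h, add_pow, finset_sum_coeff]
  have hterm : ∀ i, ((-X ^ d : ℝ[X]) ^ i * 1 ^ (t - i) * (t.choose i : ℝ[X])).coeff m
      = if d * i = m then (-1 : ℝ) ^ i * (t.choose i : ℝ) else 0 := by
    intro i
    have heq : ((-X ^ d : ℝ[X]) ^ i * 1 ^ (t - i) * (t.choose i : ℝ[X]))
        = C ((-1 : ℝ) ^ i * (t.choose i : ℝ)) * X ^ (d * i) := by
      rw [map_mul, map_pow, map_neg, map_one, Polynomial.C_eq_natCast]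
      ring
    rw [heq, coeff_C_mul, coeff_X_pow]
    by_cases hh : d * i = m
    · simp [hh]
    · rw [if_neg (fun hc => hh hc.symm), if_neg hh, mul_zero]
  simp only [hterm]
  by_cases hdm : d ∣ m
  · by_cases hle : m / d ≤ t
    · rw [Finset.sum_eq_single_of_mem (m / d)
        (Finset.mem_range.2 (Nat.lt_succ_of_le hle))]
      · rw [if_pos (Nat.mul_div_cancel' hdm), if_pos hdm]
      · intro b _ hb
        rw [if_neg]
        intro hc
        exact hb (by rw [← hc, Nat.mul_div_cancel_left b hd])
    · rw [if_pos hdm, Nat.choose_eq_zero_of_lt (by omega), Nat.cast_zero, mul_zero]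
      apply Finset.sum_eq_zero
      intro x hx
      rw [if_neg]
      intro hc
      have : x = m / d := by rw [← hc, Nat.mul_div_cancel_left x hd]
      simp only [Finset.mem_range] at hx
      omega
  · rw [if_neg hdm]
    apply Finset.sum_eq_zero
    intro x _
    rw [if_neg]
    intro hc
    exact hdm ⟨x, hc.symm⟩

/-- Trinomial revision. -/
lemma trinom {n t k j : ℕ} (ht : t ≤ n) (hk : k ≤ n) (hjt : j ≤ t) (hjk : j ≤ k) :
    n.choose t * (t.choose j * (n - t).choose (k - j)) =
    n.choose k * (k.choose j * (n - k).choose (t - j)) := by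
  rw [← Nat.mul_assoc, ← Nat.mul_assoc, Nat.choose_mul hjt, Nat.choose_mul hjk]
  set m := n - j with hm
  set a := t - j with ha
  set b := k - j with hb
  have hna : n - t = m - a := by omega
  have hnb : n - k = m - b := by omega
  rw [hna, hnb, Nat.mul_assoc, Nat.mul_assoc]
  congr 1
  by_cases hab : a + b ≤ m
  · have h1 : m.choose (a+b) * (a+b).choose a = m.choose a * (m - a).choose b := by
      rw [Nat.choose_mul (Nat.le_add_right a b), Nat.add_sub_cancel_left]
    have h2 : m.choose (a+b) * (a+b).choose b = m.choose b * (m - b).choose a := by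
      rw [Nat.choose_mul (Nat.le_add_left b a), Nat.add_sub_cancel]
    rw [← h1, ← h2, Nat.choose_symm_add]
  · have h1 : (m - a).choose b = 0 := Nat.choose_eq_zero_of_lt (by omega)
    have h2 : (m - b).choose a = 0 := Nat.choose_eq_zero_of_lt (by omega)
    rw [h1, h2, Nat.mul_zero, Nat.mul_zero]

lemma kraw_reciprocity {n t k : ℕ} (ht : t ≤ n) (hk : k ≤ n) :
    kraw n k t * (n.choose t : ℝ) = kraw n t k * (n.choose k : ℝ) := by
  unfold kraw
  rw [Finset.sum_mul, Finset.sum_mul]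
  rw [← Finset.sum_subset (Finset.range_subset_range.2 (Nat.succ_le_succ (Nat.min_le_left k t)))
      (f := fun j => (-1 : ℝ) ^ j * (t.choose j : ℝ) * ((n-t).choose (k-j) : ℝ) * (n.choose t : ℝ)),
      ← Finset.sum_subset (Finset.range_subset_range.2 (Nat.succ_le_succ (Nat.min_le_right k t)))
      (f := fun j => (-1 : ℝ) ^ j * (k.choose j : ℝ) * ((n-k).choose (t-j) : ℝ) * (n.choose k : ℝ))]
  · apply Finset.sum_congr rfl
    intro j hj
    simp only [Finset.mem_range, Nat.lt_succ_iff, le_min_iff] at hj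
    have := trinom ht hk hj.2 hj.1
    have hcast : (n.choose t : ℝ) * ((t.choose j : ℝ) * ((n - t).choose (k - j) : ℝ)) =
        (n.choose k : ℝ) * ((k.choose j : ℝ) * ((n - k).choose (t - j) : ℝ)) := by
      exact_mod_cast congrArg (Nat.cast : ℕ → ℝ) this
    ring_nf
    ring_nf at hcast
    linear_combination (-1:ℝ)^j * hcast
  · intro j hjr hj
    simp only [Finset.mem_range, Nat.lt_succ_iff, le_min_iff, not_and, not_le] at hjr hj
    have : k < j := by omega
    rw [Nat.choose_eq_zero_of_lt this]
    simp
  · intro j hjr hj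
    simp only [Finset.mem_range, Nat.lt_succ_iff, le_min_iff, not_and, not_le] at hjr hj
    have : t < j := by omega
    rw [Nat.choose_eq_zero_of_lt this]
    simp

open Polynomial in
lemma kraw_eq_coeff (n k t : ℕ) :
    kraw n k t = ((1 - X : ℝ[X]) ^ t * (1 + X) ^ (n - t)).coeff k := by
  rw [coeff_mul, Finset.Nat.sum_antidiagonal_eq_sum_range_succ_mk]
  unfold kraw
  apply Finset.sum_congr rfl
  intro j _
  rw [coeff_one_add_X_pow]
  have h1 : (1 - X : ℝ[X]) = 1 - X ^ 1 := by ring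
  rw [h1, coeff_osxp 1 t j one_pos, if_pos (one_dvd j), Nat.div_one]

open Polynomial in
lemma kraw_middle (k t : ℕ) :
    kraw (2 * k + 1) t k = (-1 : ℝ) ^ (t / 2) * (k.choose (t / 2) : ℝ) := by
  rw [kraw_eq_coeff]
  have h1 : 2 * k + 1 - k = k + 1 := by omega
  rw [h1]
  have hfac : ((1 - X : ℝ[X]) ^ k * (1 + X) ^ (k + 1)) =
      (1 - X ^ 2) ^ k + (1 - X ^ 2) ^ k * X ^ 1 := by
    rw [pow_succ, ← mul_assoc, ← mul_pow]
    have hmm : ((1 - X : ℝ[X]) * (1 + X)) = 1 - X ^ 2 := by ring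
    rw [hmm]; ring
  rw [hfac, coeff_add, coeff_mul_X_pow', coeff_osxp 2 k t two_pos,
      coeff_osxp 2 k (t - 1) two_pos]
  obtain ⟨s, rfl | rfl⟩ := Nat.even_or_odd' t
  · rcases Nat.eq_zero_or_pos s with rfl | hs
    · norm_num
    · rw [if_pos (by omega : 2 ∣ 2 * s), if_pos (by omega : 1 ≤ 2 * s),
        if_neg (by omega : ¬ 2 ∣ 2 * s - 1), add_zero]
  · rw [if_neg (by omega : ¬ 2 ∣ 2 * s + 1), if_pos (by omega : 1 ≤ 2 * s + 1),
      if_pos (by omega : 2 ∣ 2 * s + 1 - 1), zero_add]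
    have h2 : (2 * s + 1 - 1) / 2 = s := by omega
    have h3 : (2 * s + 1) / 2 = s := by omega
    rw [h2, h3]

theorem stmt15 (n t : ℕ) (hn : Odd n) (hnpos : 0 < n) (ht : t ≤ n) :
    (kraw n ((n - 1) / 2) t) ^ 2 * ((Nat.choose n t : ℝ)) ^ 2 =
      ((Nat.choose n ((n - 1) / 2) : ℝ)) ^ 2 * ((Nat.choose ((n - 1) / 2) (t / 2) : ℝ)) ^ 2 := by
  obtain ⟨k, hk⟩ := hn
  have hn2 : n = 2 * k + 1 := by omega
  subst hn2
  have hk2 : (2 * k + 1 - 1) / 2 = k := by omega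
  rw [hk2]
  have hrec := kraw_reciprocity (n := 2 * k + 1) (t := t) (k := k) ht (by omega)
  have hmid := kraw_middle k t
  calc (kraw (2*k+1) k t) ^ 2 * (((2*k+1).choose t : ℝ)) ^ 2
      = (kraw (2*k+1) k t * ((2*k+1).choose t : ℝ)) ^ 2 := by ring
    _ = (kraw (2*k+1) t k * ((2*k+1).choose k : ℝ)) ^ 2 := by rw [hrec]
    _ = ((-1:ℝ) ^ (t/2)) ^ 2 * (((2*k+1).choose k : ℝ)) ^ 2 * ((k.choose (t/2) : ℝ)) ^ 2 := by
        rw [hmid]; ring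
    _ = (((2*k+1).choose k : ℝ)) ^ 2 * ((k.choose (t/2) : ℝ)) ^ 2 := by
        rw [← pow_mul, mul_comm (t/2) 2, pow_mul, neg_one_sq, one_pow, one_mul]
end

section
/- Let n ≥ 53 be odd and let c = 2. Then 2 + 16*c^2/n^2 + (e*ln(2)*c/n)^{ln(2)*c} ≤ 2 * (sqrt(n)/2)^{(c-1)/(n-1)}. -/
set_option maxHeartbeats 1000000

open Real

theorem stmt18 (n : ℕ) (hn : Odd n) (hn53 : 53 ≤ n) :
    2 + 16 * (2 : ℝ) ^ 2 / (n : ℝ) ^ 2 +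
        (Real.exp 1 * Real.log 2 * 2 / (n : ℝ)) ^ (Real.log 2 * 2)
      ≤ 2 * (Real.sqrt n / 2) ^ (((2 : ℝ) - 1) / ((n : ℝ) - 1)) := by
  have hx53 : (53 : ℝ) ≤ (n : ℝ) := by exact_mod_cast hn53
  set x : ℝ := (n : ℝ) with hxdef
  have hx0 : (0 : ℝ) < x := by linarith
  have hu1 : 0.6931471803 < log 2 := Real.log_two_gt_d9
  have hu2 : log 2 < 0.6931471808 := Real.log_two_lt_d9
  have he1 : 2.7182818283 < exp 1 := Real.exp_one_gt_d9
  have he2 : exp 1 < 2.7182818286 := Real.exp_one_lt_d9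
  have hl2 : (0:ℝ) < log 2 := by linarith
  -- log x ≥ 131/33
  have hexp53 : exp (131/33 : ℝ) ≤ 53 := by
    have h33 : (exp (131/33 : ℝ)) ^ (33:ℕ) ≤ (53:ℝ) ^ (33:ℕ) := by
      rw [← Real.exp_nat_mul]
      have : ((33:ℕ):ℝ) * (131/33) = 131 := by norm_num
      rw [this]
      have : exp (131:ℝ) = exp 1 ^ (131:ℕ) := by rw [← Real.exp_nat_mul]; norm_num
      rw [this]
      calc exp 1 ^ (131:ℕ) ≤ (2.7182818286:ℝ) ^ (131:ℕ) := by
              apply pow_le_pow_left₀ (le_of_lt (Real.exp_pos 1)) he2.le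
        _ ≤ (53:ℝ) ^ (33:ℕ) := by norm_num
    exact le_of_pow_le_pow_left₀ (by norm_num) (by norm_num) h33
  have hlog53 : (131/33 : ℝ) ≤ log x := by
    rw [Real.le_log_iff_exp_le hx0]
    linarith
  -- log (log 2 * 2) ≤ 17/52
  have hlog2u : log (log 2 * 2) ≤ 17/52 := by
    rw [Real.log_le_iff_le_exp (by linarith)]
    have h52 : (log 2 * 2) ^ (52:ℕ) ≤ (exp (17/52 : ℝ)) ^ (52:ℕ) := by
      rw [← Real.exp_nat_mul]
      have : ((52:ℕ):ℝ) * (17/52) = 17 := by norm_num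
      rw [this]
      have h17 : exp (17:ℝ) = exp 1 ^ (17:ℕ) := by rw [← Real.exp_nat_mul]; norm_num
      rw [h17]
      calc (log 2 * 2) ^ (52:ℕ) ≤ (1.3862943616:ℝ) ^ (52:ℕ) := by
              apply pow_le_pow_left₀ (by linarith) (by linarith)
        _ ≤ (2.7182818283:ℝ) ^ (17:ℕ) := by norm_num
        _ ≤ exp 1 ^ (17:ℕ) := by apply pow_le_pow_left₀ (by norm_num) he1.le
    exact le_of_pow_le_pow_left₀ (by norm_num) (le_of_lt (Real.exp_pos _)) h52
  -- exp (27/88) ≤ 34/25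
  have hexp2788 : exp (27/88 : ℝ) ≤ 34/25 := by
    have h88 : (exp (27/88 : ℝ)) ^ (88:ℕ) ≤ ((34:ℝ)/25) ^ (88:ℕ) := by
      rw [← Real.exp_nat_mul]
      have : ((88:ℕ):ℝ) * (27/88) = 27 := by norm_num
      rw [this]
      have : exp (27:ℝ) = exp 1 ^ (27:ℕ) := by rw [← Real.exp_nat_mul]; norm_num
      rw [this]
      calc exp 1 ^ (27:ℕ) ≤ (2.7182818286:ℝ) ^ (27:ℕ) := by
              apply pow_le_pow_left₀ (le_of_lt (Real.exp_pos 1)) he2.le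
        _ ≤ ((34:ℝ)/25) ^ (88:ℕ) := by norm_num
    exact le_of_pow_le_pow_left₀ (by norm_num) (by norm_num) h88
  -- the middle term T
  have hB0 : (0:ℝ) < exp 1 * log 2 * 2 := by positivity
  have hT : (exp 1 * log 2 * 2 / x) ^ (log 2 * 2)
      = (exp 1 * log 2 * 2) ^ (log 2 * 2) / x ^ (log 2 * 2) :=
    Real.div_rpow hB0.le hx0.le _
  have hA : (exp 1 * log 2 * 2) ^ (log 2 * 2)
      = exp ((1 + log (log 2 * 2)) * (log 2 * 2)) := by
    rw [Real.rpow_def_of_pos hB0]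
    congr 1
    rw [mul_assoc, Real.log_mul (Real.exp_ne_zero 1) (by positivity), Real.log_exp]
  have hxsplit : x ^ (log 2 * 2) = x * x ^ (log 2 * 2 - 1) := by
    have : x ^ ((1:ℝ) + (log 2 * 2 - 1)) = x ^ (1:ℝ) * x ^ (log 2 * 2 - 1) :=
      Real.rpow_add hx0 _ _
    rw [show (1:ℝ) + (log 2 * 2 - 1) = log 2 * 2 by ring] at this
    rw [this, Real.rpow_one]
  have h53le : (53:ℝ) ^ (log 2 * 2 - 1) ≤ x ^ (log 2 * 2 - 1) :=
    Real.rpow_le_rpow (by norm_num) hx53 (by linarith)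
  have h53pos : (0:ℝ) < (53:ℝ) ^ (log 2 * 2 - 1) := Real.rpow_pos_of_pos (by norm_num) _
  have h53exp : (53:ℝ) ^ (log 2 * 2 - 1) = exp (log 53 * (log 2 * 2 - 1)) :=
    Real.rpow_def_of_pos (by norm_num) _
  have hApos : (0:ℝ) < exp ((1 + log (log 2 * 2)) * (log 2 * 2)) := Real.exp_pos _
  have hlog53' : (131/33 : ℝ) ≤ log 53 := by
    rw [Real.le_log_iff_exp_le (by norm_num)]; exact hexp53
  -- key numeric bound: A / 53^(2u-1) ≤ 34/25
  have hkey : exp ((1 + log (log 2 * 2)) * (log 2 * 2)) / (53:ℝ) ^ (log 2 * 2 - 1)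
      ≤ 34/25 := by
    rw [h53exp, ← Real.exp_sub]
    refine le_trans (le_trans ?_ (Real.exp_le_exp.mpr (le_refl (27/88 : ℝ)))) hexp2788
    apply Real.exp_le_exp.mpr
    have hL : log (log 2 * 2) * (log 2 * 2) ≤ (17/52) * (log 2 * 2) :=
      mul_le_mul_of_nonneg_right hlog2u (by linarith)
    have hM : (131/33 : ℝ) * (log 2 * 2 - 1) ≤ log 53 * (log 2 * 2 - 1) :=
      mul_le_mul_of_nonneg_right hlog53' (by linarith)
    nlinarith [hu1, hu2]
  -- bound middle term
  have hTbound : (exp 1 * log 2 * 2 / x) ^ (log 2 * 2) ≤ (34/25) / x := by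
    rw [hT, hA, hxsplit]
    have hd1 : x * (53:ℝ) ^ (log 2 * 2 - 1) ≤ x * x ^ (log 2 * 2 - 1) :=
      mul_le_mul_of_nonneg_left h53le hx0.le
    calc exp ((1 + log (log 2 * 2)) * (log 2 * 2)) / (x * x ^ (log 2 * 2 - 1))
        ≤ exp ((1 + log (log 2 * 2)) * (log 2 * 2)) / (x * (53:ℝ) ^ (log 2 * 2 - 1)) := by
          apply div_le_div_of_nonneg_left hApos.le (by positivity) hd1
      _ = (exp ((1 + log (log 2 * 2)) * (log 2 * 2)) / (53:ℝ) ^ (log 2 * 2 - 1)) / x := by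
          rw [div_div]; ring_nf
      _ ≤ (34/25) / x := by
          gcongr
  -- bound first term
  have hfirst : 16 * (2:ℝ) ^ 2 / x ^ 2 ≤ (64/53) / x := by
    have h1 : (53:ℝ) * x ≤ x ^ 2 := by nlinarith
    calc 16 * (2:ℝ) ^ 2 / x ^ 2 = 64 / x ^ 2 := by norm_num
      _ ≤ 64 / (53 * x) := by
          apply div_le_div_of_nonneg_left (by norm_num) (by positivity) h1
      _ = (64/53) / x := by rw [div_div]
  -- RHS lower bound
  have hsqrt7 : (7:ℝ) ≤ Real.sqrt x := by
    have : Real.sqrt 49 ≤ Real.sqrt x := Real.sqrt_le_sqrt (by linarith)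
    rwa [show (49:ℝ) = 7^2 by norm_num, Real.sqrt_sq (by norm_num)] at this
  have hb0 : (0:ℝ) < Real.sqrt x / 2 := by linarith
  have hx1 : (0:ℝ) < x - 1 := by linarith
  have hlogb : log (Real.sqrt x / 2) = log x / 2 - log 2 := by
    rw [Real.log_div (by positivity) (by norm_num), Real.log_sqrt hx0.le]
  have hrhs : 2 + (log x - 2 * log 2) / (x - 1)
      ≤ 2 * (Real.sqrt x / 2) ^ (((2:ℝ) - 1) / (x - 1)) := by
    rw [Real.rpow_def_of_pos hb0]
    have hz := Real.add_one_le_exp (log (Real.sqrt x / 2) * (((2:ℝ) - 1) / (x - 1)))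
    have hzz : log (Real.sqrt x / 2) * (((2:ℝ) - 1) / (x - 1))
        = (log x - 2 * log 2) / (x - 1) / 2 := by
      rw [hlogb]; field_simp; ring
    rw [hzz] at hz
    rw [hzz]
    linarith
  -- numeric combination
  have hnum : (64/53 : ℝ) + 34/25 ≤ log x - 2 * log 2 := by
    have : (64/53 : ℝ) + 34/25 ≤ 131/33 - 2 * 0.6931471808 := by norm_num
    linarith
  have hmid : (64/53) / x + (34/25) / x ≤ (log x - 2 * log 2) / (x - 1) := by
    have h1 : (64/53) / x + (34/25) / x = (64/53 + 34/25) / x := by ring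
    have h2 : (64/53 + 34/25 : ℝ) / x ≤ (log x - 2 * log 2) / x := by gcongr
    have h3 : (log x - 2 * log 2) / x ≤ (log x - 2 * log 2) / (x - 1) := by
      apply div_le_div_of_nonneg_left (by linarith [hnum]) hx1 (by linarith)
    linarith
  linarith [hTbound, hfirst, hrhs, hmid]
end
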